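/- Let p ≥ 3 be a prime and u ∈ {2,…,p−1}. Then there exist j, k ∈ {0,…,p−1} with k ≠ 0 such that for every s ∈ ℕ₊ and every n'' ∈ ℕ, the integer n = n''·p^{s+1} + k·p^s + j satisfies ν_p( ∑_{i=0}^{u} (−1)^i · C(u,i) · D_p(n−i) ) ≥ 2. -/

import Mathlib

open PowerSeries Finset

/-- The number of digits equal to `i` in the base-`p` representation of `n`. -/
def Np (p i n : ℕ) : ℕ := (Nat.digits p n).count i

/-- `Dcoef p r n` is the coefficient of `x^n` in `∏_{i=0}^∞ (1 - x^{p^i})^r`.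
Since `p ≥ 2`, the factors with index `i > n` do not affect the coefficient of `x^n`,
so the product may be truncated at `i = n`. -/
noncomputable def Dcoef (p r n : ℕ) : ℤ :=
  PowerSeries.coeff (R := ℤ) n (∏ i ∈ Finset.range (n + 1), (1 - PowerSeries.X ^ p ^ i) ^ r)

/-- `Dp p n = D_{p,p-1}(n)`. -/
noncomputable def Dp (p n : ℕ) : ℤ := Dcoef p (p - 1) n

/-- `Acoef m k n` is the coefficient of `x^n` in `∏_{i=0}^∞ (1 - x^{m^i})^{-k}`,
the number of `k`-colored `m`-ary partitions of `n`.  Here `(1 - X^{m^i})⁻¹` is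
realized as `PowerSeries.invOfUnit (1 - X ^ m ^ i) 1`, and since `m ≥ 2` the factors
with index `i > n` do not affect the coefficient of `x^n`. -/
noncomputable def Acoef (m k n : ℕ) : ℤ :=
  PowerSeries.coeff (R := ℤ) n
    (∏ i ∈ Finset.range (n + 1),
      (PowerSeries.invOfUnit (1 - PowerSeries.X ^ m ^ i) 1) ^ k)

/-!
Writing `F = ∏ (1 - X^{p^i})^{p-1}`, one has `F(X) = (1 - X)^{p-1} F(X^p)`, so `D_p` is
multiplicative in the base-`p` digits: `D_p(pq + r) = (-1)^r C(p-1, r) D_p(q)`. The alternating sum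
is the coefficient of `X^n` in `(1 - X)^u F(X) = (1 - X)^{u+p-1} F(X^p)`, and since
`u + p - 1 < 2p` only two terms survive: for `n = pq + j` it equals
`(-1)^j C(u+p-1, j) D_p(q) + (-1)^{p+j} C(u+p-1, p+j) D_p(q-1)`.
For `q = (pN + k) p^{s-1}` the digit rule turns this into
`±D_p(N) (C(p-1, k) A + C(p-1, k-1) B)` with `A = C(p+m, j)`, `B = C(p+m, p+j)`, `m = u - 1`.
By Lucas `B ≡ A (mod p)`, and for `j = 0` or `j = 1` one has `B ≢ A (mod p²)`. As
`k C(p-1, k) = (p - k) C(p-1, k-1)`, the bracket is divisible by `p²` as soon as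
`A + k (B - A)/p ≡ 0 (mod p)`, which fixes `k`.
-/

namespace PowerSeries

variable {R : Type*} [CommRing R]

theorem coeff_one_sub_X_pow (N a : ℕ) :
    coeff a ((1 - X : R⟦X⟧) ^ N) = (-1) ^ a * N.choose a := by
  have h : (1 - X : R⟦X⟧) ^ N = rescale (-1) (((1 + Polynomial.X) ^ N : Polynomial R) : R⟦X⟧) := by
    simp [map_pow, sub_eq_add_neg]
  rw [h, coeff_rescale, Polynomial.coeff_coe, Polynomial.coeff_one_add_X_pow]

theorem coeff_one_sub_X_pow_mul (F : R⟦X⟧) {u n : ℕ} (hun : u ≤ n) :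
    coeff n ((1 - X) ^ u * F) = ∑ i ∈ range (u + 1), (-1) ^ i * u.choose i * coeff (n - i) F := by
  rw [coeff_mul, Nat.sum_antidiagonal_eq_sum_range_succ_mk]
  simp only [coeff_one_sub_X_pow]
  refine (sum_subset (range_subset_range.mpr (by omega)) fun i _ hi ↦ ?_).symm
  rw [Nat.choose_eq_zero_of_lt (by simpa using hi)]
  simp

theorem coeff_mul_of_X_pow_dvd_sub_one (A : R⟦X⟧) {B : R⟦X⟧} {N n : ℕ} (hB : X ^ N ∣ B - 1)
    (hn : n < N) : coeff n (A * B) = coeff n A := by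
  have h : coeff n (A * (B - 1)) = 0 := X_pow_dvd_iff.mp (dvd_mul_of_dvd_right hB A) n hn
  rwa [mul_sub, mul_one, map_sub, sub_eq_zero] at h

theorem coeff_mul_expand {p : ℕ} (hp : p ≠ 0) (G Q : R⟦X⟧) {r : ℕ} (hr : r < p) (q : ℕ) :
    coeff (p * q + r) (G * expand p hp Q) =
      ∑ l ∈ range (q + 1), coeff (p * l + r) G * coeff (q - l) Q := by
  rw [coeff_mul]
  refine (sum_of_injOn (fun l ↦ (p * l + r, p * (q - l))) ?_ ?_ ?_ ?_).symm
  · intro l _ l' _ h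
    simpa [hp] using (Prod.ext_iff.mp h).1
  · intro l hl
    obtain ⟨d, rfl⟩ := Nat.exists_eq_add_of_le (Nat.lt_succ_iff.mp (mem_range.mp hl))
    simp only [mem_coe, HasAntidiagonal.mem_antidiagonal, Nat.add_sub_cancel_left]
    ring
  · rintro ⟨a, b⟩ hab hnot
    rw [HasAntidiagonal.mem_antidiagonal] at hab
    by_cases hb : p ∣ b
    · obtain ⟨c, rfl⟩ := hb
      have hcq : c ≤ q := by
        by_contra! h
        nlinarith
      obtain ⟨d, rfl⟩ := Nat.exists_eq_add_of_le hcq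
      refine absurd ⟨d, by simp, ?_⟩ hnot
      simp only [Prod.mk.injEq]
      constructor
      · nlinarith
      · congr 1; omega
    · simp [coeff_expand_of_not_dvd p hp Q hb]
  · intro l _
    simp only [coeff_expand_mul]

end PowerSeries

namespace Dcoef

noncomputable def partialProd (p r m : ℕ) : ℤ⟦X⟧ := ∏ i ∈ range m, (1 - X ^ p ^ i) ^ r

theorem partialProd_succ {p : ℕ} (hp : p ≠ 0) (r m : ℕ) :
    partialProd p r (m + 1) = (1 - X) ^ r * expand p hp (partialProd p r m) := by
  simp only [partialProd, prod_range_succ', map_prod, map_pow, map_sub, map_one, expand_X,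
    pow_zero, pow_one, ← pow_mul, ← pow_succ']
  exact mul_comm _ _

theorem coeff_partialProd {p : ℕ} (hp : 1 < p) (r : ℕ) {n m : ℕ} (hnm : n < m) :
    coeff n (partialProd p r m) = Dcoef p r n := by
  induction m, hnm using Nat.le_induction with
  | base => rfl
  | succ m hm ih =>
    have hdvd : (X : ℤ⟦X⟧) ^ p ^ m ∣ (1 - X ^ p ^ m) ^ r - 1 := by
      have h := sub_dvd_pow_sub_pow (1 - X ^ p ^ m : ℤ⟦X⟧) 1 r
      rwa [one_pow, sub_sub_cancel_left, neg_dvd] at h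
    have hn : n < p ^ m :=
      (Nat.lt_pow_self hp).trans_le (Nat.pow_le_pow_right (by omega) (by omega))
    rw [partialProd, prod_range_succ, ← partialProd, coeff_mul_of_X_pow_dvd_sub_one _ hdvd hn,
      ih]

end Dcoef

open Dcoef

theorem Dcoef_mul_add {p r : ℕ} (hp : 1 < p) (hr : r < p) {i : ℕ} (hi : i < p) (q : ℕ) :
    Dcoef p r (p * q + i) = (-1) ^ i * r.choose i * Dcoef p r q := by
  have hp0 : p ≠ 0 := by omega
  have hq : q < p * q + i + 1 := by nlinarith
  have hhigh : ∀ l ∈ range q, coeff (p * (l + 1) + i) ((1 - X) ^ r : ℤ⟦X⟧) = 0 := fun l _ ↦ by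
    rw [coeff_one_sub_X_pow, Nat.choose_eq_zero_of_lt (by nlinarith), Nat.cast_zero, mul_zero]
  rw [← coeff_partialProd hp r (show p * q + i < p * q + i + 1 + 1 by omega),
    partialProd_succ hp0, coeff_mul_expand hp0 _ _ hi, sum_range_succ',
    sum_eq_zero fun l hl ↦ by rw [hhigh l hl, zero_mul], zero_add, mul_zero, zero_add,
    coeff_one_sub_X_pow, Nat.sub_zero, coeff_partialProd hp r hq]

theorem sum_alternating_Dcoef {p r u : ℕ} (hp : 1 < p) (hr : r < p) (hu : u ≤ p) {j : ℕ}
    (hj : j < p) {q : ℕ} (hq : q ≠ 0) :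
    ∑ i ∈ range (u + 1), (-1) ^ i * u.choose i * Dcoef p r (p * q + j - i) =
      (-1) ^ j * (u + r).choose j * Dcoef p r q +
        (-1) ^ (p + j) * (u + r).choose (p + j) * Dcoef p r (q - 1) := by
  have hp0 : p ≠ 0 := by omega
  have hqn : q ≤ p * q := Nat.le_mul_of_pos_left q (by omega)
  have hpq : p ≤ p * q := Nat.le_mul_of_pos_right p (by omega)
  have hhigh : ∀ l ∈ range (q - 1), coeff (p * (l + 1 + 1) + j) ((1 - X) ^ (u + r) : ℤ⟦X⟧) = 0 :=
    fun l _ ↦ by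
      rw [coeff_one_sub_X_pow, Nat.choose_eq_zero_of_lt (by nlinarith), Nat.cast_zero, mul_zero]
  calc ∑ i ∈ range (u + 1), (-1) ^ i * u.choose i * Dcoef p r (p * q + j - i)
      = coeff (p * q + j) ((1 - X) ^ u * partialProd p r (p * q + j + 2)) := by
        rw [coeff_one_sub_X_pow_mul _ (by omega)]
        refine sum_congr rfl fun i _ ↦ ?_
        rw [coeff_partialProd hp r (by omega)]
    _ = coeff (p * q + j) ((1 - X) ^ (u + r) * expand p hp0 (partialProd p r (p * q + j + 1))) :=
        by
        rw [partialProd_succ hp0, pow_add, mul_assoc]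
    _ = _ := by
        obtain ⟨q, rfl⟩ := Nat.exists_eq_add_of_le' (Nat.one_le_iff_ne_zero.mpr hq)
        rw [coeff_mul_expand hp0 _ _ hj, sum_range_succ', sum_range_succ',
          sum_eq_zero fun l hl ↦ by rw [hhigh l hl, zero_mul], zero_add,
          coeff_partialProd hp r (show q + 1 - (0 + 1) < p * (q + 1) + j + 1 by omega),
          coeff_partialProd hp r (show q + 1 - 0 < p * (q + 1) + j + 1 by omega),
          coeff_one_sub_X_pow, coeff_one_sub_X_pow, Nat.add_sub_cancel, Nat.sub_zero]
        simp only [mul_zero, zero_add, mul_one]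
        ring

theorem Dcoef_mul_pow {p r : ℕ} (hp : 1 < p) (hr : r < p) (q t : ℕ) :
    Dcoef p r (q * p ^ t) = Dcoef p r q := by
  induction t with
  | zero => rw [pow_zero, mul_one]
  | succ t ih =>
    rw [show q * p ^ (t + 1) = p * (q * p ^ t) + 0 by ring, Dcoef_mul_add hp hr (by omega), ih]
    simp

theorem Dp_mul_pow_sub_one {p : ℕ} (hp : 1 < p) (hodd : Odd p) {M : ℕ} (hM : M ≠ 0) (t : ℕ) :
    Dp p (M * p ^ t - 1) = Dp p (M - 1) := by
  have hlast : (-1 : ℤ) ^ (p - 1) * ((p - 1).choose (p - 1) : ℕ) = 1 := by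
    rw [Nat.choose_self, Nat.cast_one, mul_one, (Nat.Odd.sub_odd hodd odd_one).neg_one_pow]
  induction t with
  | zero => rw [pow_zero, mul_one]
  | succ t ih =>
    obtain ⟨c, hc⟩ := Nat.exists_eq_add_of_le' (Nat.one_le_iff_ne_zero.mpr
      (mul_ne_zero hM (pow_ne_zero t (show p ≠ 0 by omega))))
    have harg : M * p ^ (t + 1) - 1 = p * (M * p ^ t - 1) + (p - 1) := by
      rw [pow_succ, ← mul_assoc, hc, Nat.add_sub_cancel, add_one_mul, mul_comm c p]
      omega
    rw [harg, Dp, Dcoef_mul_add hp (by omega) (by omega), hlast, one_mul, ← Dp, ih]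

theorem sum_alternating_Dp {p u j k s : ℕ} (hp : 1 < p) (hodd : Odd p) (hu : u ≤ p) (hj : j < p)
    (hk : k < p) (hk0 : k ≠ 0) (hs : s ≠ 0) (N : ℕ) :
    ∑ i ∈ range (u + 1), (-1) ^ i * u.choose i * Dp p (N * p ^ (s + 1) + k * p ^ s + j - i) =
      (-1) ^ (j + k) * Dp p N * ((p - 1).choose k * (u + (p - 1)).choose j +
        (p - 1).choose (k - 1) * (u + (p - 1)).choose (p + j)) := by
  set q := (p * N + k) * p ^ (s - 1)
  have hn : N * p ^ (s + 1) + k * p ^ s + j = p * q + j := by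
    obtain ⟨s, rfl⟩ := Nat.exists_eq_add_of_le' (Nat.one_le_iff_ne_zero.mpr hs)
    simp only [q, Nat.add_sub_cancel]
    ring
  have hq : q ≠ 0 := mul_ne_zero (by omega) (pow_ne_zero _ (by omega))
  have hsign : (-1 : ℤ) ^ (p + j) * (-1) ^ (k - 1) = (-1) ^ (j + k) := by
    obtain ⟨a, rfl⟩ := hodd
    obtain ⟨k, rfl⟩ := Nat.exists_eq_add_of_le' (Nat.one_le_iff_ne_zero.mpr hk0)
    rw [Nat.add_sub_cancel, pow_add, pow_add, pow_add, pow_succ, pow_mul]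
    ring
  simp only [hn, Dp]
  rw [sum_alternating_Dcoef hp (by omega) hu hj hq, Dcoef_mul_pow hp (by omega), ← Dp, ← Dp,
    Dp_mul_pow_sub_one hp hodd (by omega), Dp, Dp, Nat.add_sub_assoc (by omega),
    Dcoef_mul_add hp (by omega) hk, Dcoef_mul_add hp (by omega) (by omega)]
  linear_combination (↑((u + (p - 1)).choose (p + j)) * ↑((p - 1).choose (k - 1)) *
    Dcoef p (p - 1) N) * hsign

theorem choose_prime_add_modEq {p : ℕ} [Fact p.Prime] {m j : ℕ} (hm : m < p) (hj : j < p) :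
    (p + m).choose (p + j) ≡ (p + m).choose j [MOD p] := by
  have hp : 0 < p := Fact.out (p := p.Prime) |>.pos
  have h₁ := Choose.choose_modEq_choose_mod_mul_choose_div_nat (n := p + m) (k := p + j) (p := p)
  have h₂ := Choose.choose_modEq_choose_mod_mul_choose_div_nat (n := p + m) (k := j) (p := p)
  simp only [Nat.add_mod_left, Nat.mod_eq_of_lt hm, Nat.mod_eq_of_lt hj, Nat.add_div_left _ hp,
    Nat.div_eq_of_lt hm, Nat.div_eq_of_lt hj] at h₁ h₂
  simpa using h₁.trans h₂.symm

theorem exists_not_sq_dvd_choose_prime_add_sub {p m : ℕ} (hp : 0 < p) (hm : m + 1 < p) :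
    ∃ j ≤ 1, ¬ (p : ℤ) ^ 2 ∣ (p + m).choose (p + j) - (p + m).choose j := by
  by_contra! h
  obtain ⟨x, hx⟩ := h 0 zero_le_one
  obtain ⟨y, hy⟩ := h 1 le_rfl
  have hrec : ((p + m).choose (p + 1) : ℤ) * (p + 1) = (p + m).choose p * m := by
    have h := Nat.choose_succ_right_eq (p + m) p
    rw [Nat.add_sub_cancel_left] at h
    exact_mod_cast h
  simp only [add_zero, Nat.choose_zero_right, Nat.choose_one_right, Nat.cast_one,
    Nat.cast_add] at hx hy
  -- eliminating the two binomials leaves `p (p + m + 1) ≡ 0 (mod p²)`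
  have hdvd : (p : ℤ) ∣ m + 1 := by
    refine ⟨x * m - y * (p + 1) - 1, mul_left_cancel₀ (show (p : ℤ) ≠ 0 by positivity) ?_⟩
    linear_combination m * hx - (p + 1) * hy + hrec
  have := Nat.le_of_dvd (by omega) (show p ∣ m + 1 by exact_mod_cast hdvd)
  omega

theorem exists_dvd_add_mul {p : ℕ} (hp : p.Prime) {A D : ℤ} (hA : ¬ (p : ℤ) ∣ A)
    (hD : ¬ (p : ℤ) ∣ D) : ∃ k : ℕ, 0 < k ∧ k < p ∧ (p : ℤ) ∣ A + k * D := by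
  have := Fact.mk hp
  rw [← ZMod.intCast_zmod_eq_zero_iff_dvd] at hA hD
  set c : ZMod p := -A * (D : ZMod p)⁻¹
  have hc : c ≠ 0 := mul_ne_zero (neg_ne_zero.mpr hA) (inv_ne_zero hD)
  refine ⟨c.val, Nat.pos_of_ne_zero ((ZMod.val_ne_zero c).mpr hc), ZMod.val_lt c, ?_⟩
  rw [← ZMod.intCast_zmod_eq_zero_iff_dvd]
  push_cast
  rw [ZMod.natCast_zmod_val, mul_assoc, inv_mul_cancel₀ hD]
  ring

theorem exists_sq_dvd_choose_mul_add {p : ℕ} (hp : p.Prime) {A B : ℤ} (hA : ¬ (p : ℤ) ∣ A)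
    (hBA : (p : ℤ) ∣ B - A) (hBA' : ¬ (p : ℤ) ^ 2 ∣ B - A) :
    ∃ k : ℕ, 0 < k ∧ k < p ∧
      (p : ℤ) ^ 2 ∣ (p - 1).choose k * A + (p - 1).choose (k - 1) * B := by
  obtain ⟨D, hD⟩ := hBA
  have hpD : ¬ (p : ℤ) ∣ D := fun h ↦ hBA' (by rw [hD, pow_two]; exact mul_dvd_mul_left _ h)
  obtain ⟨k, hk0, hkp, e, he⟩ := exists_dvd_add_mul hp hA hpD
  refine ⟨k, hk0, hkp, ?_⟩
  have hchoose : ((p - 1).choose k : ℤ) * k = (p - 1).choose (k - 1) * (p - k) := by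
    have h := Nat.choose_succ_right_eq (p - 1) (k - 1)
    rw [Nat.sub_add_cancel hk0, show p - 1 - (k - 1) = p - k by omega] at h
    rw [← Nat.cast_sub hkp.le]
    exact_mod_cast h
  -- `k (C(p-1,k) A + C(p-1,k-1) B) = C(p-1,k-1) p (A + k D)`
  have hmul : (p : ℤ) ^ 2 ∣ k * ((p - 1).choose k * A + (p - 1).choose (k - 1) * B) :=
    ⟨(p - 1).choose (k - 1) * e, by
      linear_combination A * hchoose + (p - 1).choose (k - 1) * p * he +
        k * (p - 1).choose (k - 1) * hD⟩
  refine (Nat.prime_iff_prime_int.mp hp).pow_dvd_of_dvd_mul_left 2 ?_ hmul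
  exact fun h ↦ absurd (Nat.le_of_dvd hk0 (Int.natCast_dvd_natCast.mp h)) (by omega)

theorem exists_sq_dvd_choose_mul_choose_add {p m : ℕ} (hp : p.Prime) (hm : 0 < m)
    (hmp : m + 1 < p) :
    ∃ j ≤ 1, ∃ k : ℕ, 0 < k ∧ k < p ∧ (p : ℤ) ^ 2 ∣
      (p - 1).choose k * (p + m).choose j + (p - 1).choose (k - 1) * (p + m).choose (p + j) := by
  have := Fact.mk hp
  obtain ⟨j, hj, hsq⟩ := exists_not_sq_dvd_choose_prime_add_sub hp.pos hmp
  have hA : ¬ (p : ℤ) ∣ (p + m).choose j := by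
    rw [Int.natCast_dvd_natCast]
    interval_cases j
    · simpa using hp.one_lt.ne'
    · rw [Nat.choose_one_right, Nat.dvd_add_right (dvd_refl p)]
      exact Nat.not_dvd_of_pos_of_lt hm (by omega)
  have hBA : (p : ℤ) ∣ (p + m).choose (p + j) - (p + m).choose j :=
    (Nat.modEq_iff_dvd.mp (choose_prime_add_modEq (by omega) (by omega : j < p)).symm)
  exact ⟨j, hj, exists_sq_dvd_choose_mul_add hp hA hBA hsq⟩

theorem stmt6 (p u : ℕ) (hp : p.Prime) (hp3 : 3 ≤ p) (hu1 : 2 ≤ u) (hu2 : u ≤ p - 1) :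
    ∃ j k : ℕ, j ≤ p - 1 ∧ k ≤ p - 1 ∧ k ≠ 0 ∧
      ∀ s : ℕ, 1 ≤ s → ∀ n'' : ℕ,
        2 ≤ emultiplicity (p : ℤ)
          (∑ i ∈ Finset.range (u + 1), (-1 : ℤ) ^ i * (u.choose i : ℤ) *
            Dp p (n'' * p ^ (s + 1) + k * p ^ s + j - i)) := by
  obtain ⟨j, hj, k, hk0, hkp, hdvd⟩ :=
    exists_sq_dvd_choose_mul_choose_add hp (m := u - 1) (by omega) (by omega)
  refine ⟨j, k, by omega, by omega, by omega, fun s hs n'' ↦ ?_⟩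
  rw [sum_alternating_Dp hp.one_lt (hp.odd_of_ne_two (by omega)) (by omega) (by omega) hkp
    (by omega) (by omega) n'', show u + (p - 1) = p + (u - 1) by omega]
  exact_mod_cast le_emultiplicity_of_pow_dvd (dvd_mul_of_dvd_right hdvd _)
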